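/- arXiv:2111.00681 — 2 statements merged into one kernel-verified Lean document; each statement's English description precedes it below -/
import Mathlib

section
/- Let ℐ = {I_k}_{k∈ℕ} be a graded family of monomial ideals. If the union P = ⋃_{k∈ℕ} (1/k)·NP(I_k) is a polyhedron, then there exists an integer c ≥ 1 such that P = (1/c)·NP(I_c), and consequently Δ(ℐ) = (1/c)·NP(I_c). -/
open MvPolynomial Pointwise

/-- The Newton polyhedron of a monomial ideal: convex hull of exponent vectors of monomials in `I`. -/
def NP {n : ℕ} {𝕜 : Type*} [Field 𝕜] (I : Ideal (MvPolynomial (Fin n) 𝕜)) : Set (Fin n → ℝ) :=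
  convexHull ℝ {x | ∃ a : Fin n →₀ ℕ, monomial a (1 : 𝕜) ∈ I ∧ x = fun i => (a i : ℝ)}

/-- `I` is a monomial ideal: generated by monomials. -/
def IsMonomialIdeal {n : ℕ} {𝕜 : Type*} [Field 𝕜] (I : Ideal (MvPolynomial (Fin n) 𝕜)) : Prop :=
  ∃ S : Set (Fin n →₀ ℕ), I = Ideal.span ((fun a => monomial a (1 : 𝕜)) '' S)

/-- The integral closure of an ideal `I`: elements satisfying an equation of integral dependence
`f^m + c₁ f^{m-1} + ⋯ + c_m = 0` with `c_i ∈ I^i`. -/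
def intCl {R : Type*} [CommRing R] (I : Ideal R) : Set R :=
  {f | ∃ m : ℕ, 0 < m ∧ ∃ c : ℕ → R, (∀ i ∈ Finset.Icc 1 m, c i ∈ I ^ i) ∧
    f ^ m + ∑ i ∈ Finset.Icc 1 m, c i * f ^ (m - i) = 0}

/-- The Newton–Okounkov body of a graded family of monomial ideals. -/
def NObody {n : ℕ} {𝕜 : Type*} [Field 𝕜] (F : ℕ → Ideal (MvPolynomial (Fin n) 𝕜)) :
    Set (Fin n → ℝ) :=
  closure (⋃ k : ℕ, {x | 0 < k ∧ ∃ a : Fin n →₀ ℕ, monomial a (1 : 𝕜) ∈ F k ∧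
    x = fun i => (a i : ℝ) / k})

/-- The limiting body `⋃ₖ (1/k) NP(I_k)` of a graded family. -/
def limitBody {n : ℕ} {𝕜 : Type*} [Field 𝕜] (F : ℕ → Ideal (MvPolynomial (Fin n) 𝕜)) :
    Set (Fin n → ℝ) :=
  ⋃ k : ℕ, ⋃ (_ : 0 < k), ((k : ℝ)⁻¹) • NP (F k)

/-- A polyhedron: a finite intersection of closed half-spaces. -/
def IsPolyhedron {n : ℕ} (P : Set (Fin n → ℝ)) : Prop :=
  ∃ H : Finset ((Fin n → ℝ) × ℝ), P = {x | ∀ h ∈ H, h.2 ≤ ∑ i, h.1 i * x i}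

/-- Maximum dimension of a compact face (faces are taken to be extreme subsets). -/
noncomputable def mdc {n : ℕ} (P : Set (Fin n → ℝ)) : ℕ :=
  sSup {d | ∃ F : Set (Fin n → ℝ), F.Nonempty ∧ IsExtreme ℝ P F ∧ IsCompact F ∧
    Module.finrank ℝ (vectorSpan ℝ F) = d}

/-- The symbolic power family of a monomial ideal of linear-power type:
`I^{(k)} = ⋂ⱼ 𝔭ⱼ^{k ωⱼ}` where `𝔭ⱼ` is generated by the variables in `supp j`. -/
noncomputable def symb {n : ℕ} {𝕜 : Type*} [Field 𝕜] {ι : Type*} [Fintype ι]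
    (supp : ι → Finset (Fin n)) (ω : ι → ℕ) (k : ℕ) : Ideal (MvPolynomial (Fin n) 𝕜) :=
  ⨅ j, (Ideal.span ((fun i => (X i : MvPolynomial (Fin n) 𝕜)) '' (supp j : Set (Fin n)))) ^ (k * ω j)

/-- The symbolic polyhedron of a monomial ideal of linear-power type. -/
def SPset {n : ℕ} {ι : Type*} (supp : ι → Finset (Fin n)) (ω : ι → ℕ) : Set (Fin n → ℝ) :=
  {x | (∀ i, 0 ≤ x i) ∧ ∀ j, (ω j : ℝ) ≤ ∑ i ∈ supp j, x i}

/-! Each body `k⁻¹ • NP(I_k)` is a convex upper set in the nonnegative orthant, and gradedness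
gives `k⁻¹ • NP(I_k) ⊆ (km)⁻¹ • NP(I_{km})`. If the union `P` is a polyhedron, its normals are
nonnegative, so cutting the points of `P` at a uniform height `M` keeps them in `P`: `P` is the
upper closure of the compact polyhedron `P ∩ [0, M]ⁿ`, the convex hull of its finitely many extreme
points. These lie in finitely many bodies, hence in a single `c⁻¹ • NP(I_c)`, which therefore
contains `P`. Finally `Δ(ℐ) = P` since `P` is closed and, by rounding convex weights, every point of
a body is a limit of normalized exponents `a / m` with `xᵃ ∈ I_m`. -/

open Set Filter Topology

section Polyhedron

variable {ι E : Type*} [Finite ι] [AddCommGroup E] [Module ℝ E]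

theorem eq_zero_of_mem_extremePoints_of_active {f : ι → E →ₗ[ℝ] ℝ} {b : ι → ℝ} {x z : E}
    (hx : x ∈ {y | ∀ j, b j ≤ f j y}.extremePoints ℝ) (hz : ∀ j, f j x = b j → f j z = 0) :
    z = 0 := by
  rw [mem_extremePoints] at hx
  have hnear : ∀ᶠ c : ℝ in 𝓝 0, x + c • z ∈ {y | ∀ j, b j ≤ f j y} := by
    refine eventually_all.2 fun j => ?_
    simp only [map_add, map_smul, smul_eq_mul]
    rcases (hx.1 j).eq_or_lt with hj | hj
    · exact Eventually.of_forall fun c => by rw [hz j hj.symm, mul_zero, add_zero, hj]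
    · have hcont : Tendsto (fun c : ℝ => f j x + c * f j z) (𝓝 0) (𝓝 (f j x)) := by
        simpa using (show Continuous fun c : ℝ => f j x + c * f j z by fun_prop).tendsto 0
      exact (hcont.eventually_const_lt hj).mono fun c hc => hc.le
  obtain ⟨ε, hε, hball⟩ := Metric.eventually_nhds_iff.1 hnear
  have hmem : ∀ c : ℝ, |c| = ε / 2 → x + c • z ∈ {y | ∀ j, b j ≤ f j y} := fun c hc =>
    hball (by rw [Real.dist_0_eq_abs, hc]; linarith)
  have hmid : x ∈ openSegment ℝ (x + (ε / 2) • z) (x + (-(ε / 2)) • z) :=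
    ⟨1 / 2, 1 / 2, by norm_num, by norm_num, by norm_num, by module⟩
  have hfix := (hx.2 _ (hmem _ (abs_of_pos (by positivity))) _
    (hmem _ (by rw [abs_neg, abs_of_pos (by positivity)])) hmid).1
  simpa [hε.ne'] using hfix

/-- An extreme point is determined by the set of constraints active at it. -/
theorem finite_extremePoints_setOf_forall_le (f : ι → E →ₗ[ℝ] ℝ) (b : ι → ℝ) :
    ({x | ∀ j, b j ≤ f j x}.extremePoints ℝ).Finite := by
  refine Finite.of_injOn (f := fun x => {j | f j x = b j}) (mapsTo_univ _ _) ?_ finite_univ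
  intro x hx y _ hxy
  refine sub_eq_zero.1 (eq_zero_of_mem_extremePoints_of_active hx fun j hj => ?_)
  have hj' : f j y = b j := (Set.ext_iff.1 hxy j).1 hj
  rw [map_sub, hj, hj', sub_self]

theorem convexHull_extremePoints_setOf_forall_le [TopologicalSpace E] [IsTopologicalAddGroup E]
    [ContinuousSMul ℝ E] [LocallyConvexSpace ℝ E] [T2Space E] (f : ι → E →ₗ[ℝ] ℝ) (b : ι → ℝ)
    (hK : IsCompact {x | ∀ j, b j ≤ f j x}) :
    convexHull ℝ ({x | ∀ j, b j ≤ f j x}.extremePoints ℝ) = {x | ∀ j, b j ≤ f j x} := by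
  have hconv : Convex ℝ {x | ∀ j, b j ≤ f j x} := by
    rw [ofPred_forall]
    exact convex_iInter fun j => convex_halfSpace_ge (f j).isLinear (b j)
  rw [← ((finite_extremePoints_setOf_forall_le f b).isClosed_convexHull (𝕜 := ℝ)).closure_eq]
  exact closure_convexHull_extremePoints hK hconv

end Polyhedron

section UpperPolyhedron

variable {ι : Type*} [Fintype ι]

theorem isUpperSet_of_add_single_mem [DecidableEq ι] {C : Set (ι → ℝ)}
    (hC : ∀ x ∈ C, ∀ i, ∀ t : ℝ, 0 ≤ t → x + Pi.single i t ∈ C) : IsUpperSet C := by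
  intro x y hxy hx
  have hsum := Finset.sum_induction (s := Finset.univ) (fun i => Pi.single i ((y - x) i))
    (fun r => ∀ z ∈ C, z + r ∈ C) (fun r s hr hs z hz => add_assoc z r s ▸ hs _ (hr z hz))
    (fun z hz => (add_zero z).symm ▸ hz) (fun i _ z hz => hC z hz i _ (sub_nonneg.2 (hxy i))) x hx
  rwa [Finset.univ_sum_single, add_sub_cancel] at hsum

theorem isClosed_setOf_forall_le_dotProduct (H : Finset ((ι → ℝ) × ℝ)) :
    IsClosed {x : ι → ℝ | ∀ h ∈ H, h.2 ≤ h.1 ⬝ᵥ x} := by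
  simp only [ofPred_forall]
  exact isClosed_biInter fun h _ => isClosed_le continuous_const (by fun_prop)

theorem exists_finite_convexHull_eq_inter_Icc (H : Finset ((ι → ℝ) × ℝ)) (l u : ι → ℝ) :
    ∃ V : Set (ι → ℝ), V.Finite ∧
      convexHull ℝ V = {x | ∀ h ∈ H, h.2 ≤ h.1 ⬝ᵥ x} ∩ Icc l u := by
  let f : H ⊕ ι ⊕ ι → (ι → ℝ) →ₗ[ℝ] ℝ :=
    Sum.elim (fun h => dotProductBilin ℝ ℝ h.1.1)
      (Sum.elim LinearMap.proj fun i => -LinearMap.proj i)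
  let b : H ⊕ ι ⊕ ι → ℝ := Sum.elim (fun h => h.1.2) (Sum.elim l fun i => -u i)
  have hK : {x | ∀ h ∈ H, h.2 ≤ h.1 ⬝ᵥ x} ∩ Icc l u = {x | ∀ j, b j ≤ f j x} := by
    ext x
    simp [f, b, Sum.forall, Pi.le_def]
  have hcomp : IsCompact {x | ∀ j, b j ≤ f j x} :=
    hK ▸ isCompact_Icc.inter_left (isClosed_setOf_forall_le_dotProduct H)
  exact ⟨_, finite_extremePoints_setOf_forall_le f b,
    (convexHull_extremePoints_setOf_forall_le f b hcomp).trans hK.symm⟩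

variable {H : Finset ((ι → ℝ) × ℝ)}

theorem nonneg_of_isUpperSet_setOf_le (hup : IsUpperSet {x : ι → ℝ | ∀ h ∈ H, h.2 ≤ h.1 ⬝ᵥ x})
    {x : ι → ℝ} (hx : ∀ h ∈ H, h.2 ≤ h.1 ⬝ᵥ x) : ∀ h ∈ H, 0 ≤ h.1 := by
  classical
  intro h hh i
  rw [Pi.zero_apply]
  by_contra! hi
  set t := (h.1 ⬝ᵥ x - h.2 + 1) / -h.1 i
  have ht : 0 ≤ t := div_nonneg (by linarith [hx h hh]) (by linarith)
  have hfar := hup (le_add_of_nonneg_right ((Pi.single_nonneg (i := i)).2 ht)) hx h hh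
  have hti : h.1 i * t = -(h.1 ⬝ᵥ x - h.2 + 1) := by
    simp only [t]
    field_simp [hi.ne]
  rw [dotProduct_add, dotProduct_single, hti] at hfar
  linarith

/-- Cutting a point of the orthant at height `M` keeps it in the polyhedron: a constraint either
sees a coordinate cut down to `M`, which alone satisfies it, or does not see the cut at all. -/
theorem exists_inf_const_mem_of_isUpperSet
    (hup : IsUpperSet {x : ι → ℝ | ∀ h ∈ H, h.2 ≤ h.1 ⬝ᵥ x}) :
    ∃ M : ℝ, 0 ≤ M ∧ ∀ x : ι → ℝ, (∀ h ∈ H, h.2 ≤ h.1 ⬝ᵥ x) → 0 ≤ x →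
      ∀ h ∈ H, h.2 ≤ h.1 ⬝ᵥ (x ⊓ fun _ => M) := by
  rcases eq_empty_or_nonempty {x : ι → ℝ | ∀ h ∈ H, h.2 ≤ h.1 ⬝ᵥ x} with hP | ⟨x₀, hx₀⟩
  · exact ⟨0, le_rfl, fun x hx => absurd hx (eq_empty_iff_forall_notMem.1 hP x)⟩
  have hnn := nonneg_of_isUpperSet_setOf_le hup hx₀
  obtain ⟨M, hM⟩ := ((H.finite_toSet.prod finite_univ).image
    fun p : ((ι → ℝ) × ℝ) × ι => p.1.2 / p.1.1 p.2).bddAbove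
  refine ⟨max M 0, le_max_right _ _, fun x hx hx0 h hh => ?_⟩
  by_cases hcut : ∃ i, 0 < h.1 i ∧ max M 0 < x i
  · obtain ⟨i, hi, hxi⟩ := hcut
    have hratio : h.2 / h.1 i ≤ max M 0 :=
      (hM ⟨(h, i), ⟨hh, mem_univ i⟩, rfl⟩).trans (le_max_left _ _)
    calc h.2 ≤ h.1 i * max M 0 := (div_le_iff₀' hi).1 hratio
      _ = h.1 i * (x ⊓ fun _ => max M 0) i := by simp [inf_of_le_right hxi.le]
      _ ≤ h.1 ⬝ᵥ (x ⊓ fun _ => max M 0) :=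
        Finset.single_le_sum (f := fun j => h.1 j * (x ⊓ fun _ => max M 0) j)
          (fun j _ => mul_nonneg (hnn h hh j) (le_inf (hx0 j) (le_max_right _ _)))
          (Finset.mem_univ i)
  · push Not at hcut
    have hsame : h.1 ⬝ᵥ (x ⊓ fun _ => max M 0) = h.1 ⬝ᵥ x := Finset.sum_congr rfl fun j _ => by
      rcases (hnn h hh j).eq_or_lt with h0 | hpos
      · rw [← h0, Pi.zero_apply, zero_mul, zero_mul]
      · rw [Pi.inf_apply, inf_of_le_left (hcut j hpos)]
    exact hsame ▸ hx h hh

theorem exists_finite_forall_exists_convexHull_le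
    (hup : IsUpperSet {x : ι → ℝ | ∀ h ∈ H, h.2 ≤ h.1 ⬝ᵥ x})
    (hnn : {x : ι → ℝ | ∀ h ∈ H, h.2 ≤ h.1 ⬝ᵥ x} ⊆ Ici 0) :
    ∃ V : Set (ι → ℝ), V.Finite ∧ V ⊆ {x | ∀ h ∈ H, h.2 ≤ h.1 ⬝ᵥ x} ∧
      ∀ x ∈ {x : ι → ℝ | ∀ h ∈ H, h.2 ≤ h.1 ⬝ᵥ x}, ∃ y ∈ convexHull ℝ V, y ≤ x := by
  obtain ⟨M, hM, hcut⟩ := exists_inf_const_mem_of_isUpperSet hup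
  obtain ⟨V, hVfin, hV⟩ := exists_finite_convexHull_eq_inter_Icc H 0 fun _ => M
  refine ⟨V, hVfin, (subset_convexHull ℝ V).trans (hV ▸ inter_subset_left), fun x hx => ?_⟩
  refine ⟨x ⊓ fun _ => M, ?_, inf_le_left⟩
  rw [hV]
  exact ⟨hcut x hx (hnn hx), le_inf (hnn hx) fun _ => hM, inf_le_right⟩

end UpperPolyhedron

section ExponentSet

variable {σ R : Type*} [CommSemiring R]

def exponentSet (I : Ideal (MvPolynomial σ R)) : Set (σ → ℝ) :=
  {x | ∃ a : σ →₀ ℕ, monomial a (1 : R) ∈ I ∧ x = fun i => (a i : ℝ)}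

theorem exponentSet_subset_Ici (I : Ideal (MvPolynomial σ R)) : exponentSet I ⊆ Ici 0 := by
  rintro _ ⟨a, -, rfl⟩ i
  exact Nat.cast_nonneg _

theorem convexHull_exponentSet_subset_Ici (I : Ideal (MvPolynomial σ R)) :
    convexHull ℝ (exponentSet I) ⊆ Ici 0 :=
  convexHull_min (exponentSet_subset_Ici I) (convex_Ici 0)

theorem add_single_mem_exponentSet [DecidableEq σ] {I : Ideal (MvPolynomial σ R)}
    {x : σ → ℝ} (hx : x ∈ exponentSet I) (i : σ) (N : ℕ) :
    x + Pi.single i (N : ℝ) ∈ exponentSet I := by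
  obtain ⟨a, ha, rfl⟩ := hx
  refine ⟨a + Finsupp.single i N, ?_, ?_⟩
  · rw [add_comm, ← mul_one (1 : R), ← monomial_mul]
    exact I.mul_mem_left _ ha
  · ext j
    rcases eq_or_ne j i with rfl | hji <;> simp [*]

theorem add_single_mem_convexHull_exponentSet [DecidableEq σ] {I : Ideal (MvPolynomial σ R)}
    {x : σ → ℝ} (hx : x ∈ convexHull ℝ (exponentSet I)) (i : σ) {t : ℝ} (ht : 0 ≤ t) :
    x + Pi.single i t ∈ convexHull ℝ (exponentSet I) := by
  obtain ⟨N, hN⟩ := exists_nat_gt t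
  have hN0 : (0 : ℝ) < N := ht.trans_lt hN
  have hfar : x + Pi.single i (N : ℝ) ∈ convexHull ℝ (exponentSet I) := by
    have hmem : x + Pi.single i (N : ℝ) ∈
        convexHull ℝ ((Pi.single i (N : ℝ) : σ → ℝ) +ᵥ exponentSet I) := by
      rw [convexHull_vadd, add_comm]
      exact vadd_mem_vadd_set hx
    refine convexHull_mono ?_ hmem
    rintro _ ⟨y, hy, rfl⟩
    simpa only [vadd_eq_add, add_comm] using add_single_mem_exponentSet hy i N
  have hseg := (convex_convexHull ℝ (exponentSet I)).add_smul_mem hx hfar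
    (t := t / N) ⟨div_nonneg ht hN0.le, (div_le_one hN0).2 hN.le⟩
  rwa [← Pi.single_smul, smul_eq_mul, div_mul_cancel₀ _ hN0.ne'] at hseg

theorem isUpperSet_convexHull_exponentSet [Fintype σ] (I : Ideal (MvPolynomial σ R)) :
    IsUpperSet (convexHull ℝ (exponentSet I)) := by
  classical
  exact isUpperSet_of_add_single_mem fun _ hx i _ ht =>
    add_single_mem_convexHull_exponentSet hx i ht

end ExponentSet

section GradedFamily

variable {σ R : Type*} [CommSemiring R] {F : ℕ → Ideal (MvPolynomial σ R)}

theorem monomial_sum_mem_of_graded (hF : ∀ p q, F p * F q ≤ F (p + q)) {ι : Type*}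
    {s : Finset ι} (hs : s.Nonempty) {d : ι → ℕ} {a : ι → σ →₀ ℕ}
    (ha : ∀ i ∈ s, monomial (a i) (1 : R) ∈ F (d i)) :
    monomial (∑ i ∈ s, a i) (1 : R) ∈ F (∑ i ∈ s, d i) := by
  induction hs using Finset.Nonempty.cons_induction with
  | singleton i => simpa using ha i (Finset.mem_singleton_self i)
  | cons i s hi hs ih =>
    rw [Finset.sum_cons, Finset.sum_cons, ← mul_one (1 : R), ← monomial_mul]
    exact hF _ _ (Ideal.mul_mem_mul (ha i (Finset.mem_cons_self i s))
      (ih fun j hj => ha j (Finset.mem_cons_of_mem hj)))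

theorem monomial_nsmul_mem_of_graded (hF : ∀ p q, F p * F q ≤ F (p + q)) {k m : ℕ}
    (hm : 0 < m) {a : σ →₀ ℕ} (ha : monomial a (1 : R) ∈ F k) :
    monomial (m • a) (1 : R) ∈ F (k * m) := by
  simpa [mul_comm k] using monomial_sum_mem_of_graded hF (Finset.nonempty_range_iff.2 hm.ne')
    (d := fun _ => k) (a := fun _ => a) fun _ _ => ha

theorem natCast_smul_mem_exponentSet (hF : ∀ p q, F p * F q ≤ F (p + q)) {k m : ℕ}
    (hm : 0 < m) {x : σ → ℝ} (hx : x ∈ exponentSet (F k)) :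
    (m : ℝ) • x ∈ exponentSet (F (k * m)) := by
  obtain ⟨a, ha, rfl⟩ := hx
  exact ⟨m • a, monomial_nsmul_mem_of_graded hF hm ha, by ext; simp⟩

end GradedFamily

section NewtonPolyhedron

variable {n : ℕ} {𝕜 : Type*} [Field 𝕜] {F : ℕ → Ideal (MvPolynomial (Fin n) 𝕜)}

theorem NP_eq_convexHull_exponentSet (I : Ideal (MvPolynomial (Fin n) 𝕜)) :
    NP I = convexHull ℝ (exponentSet I) :=
  rfl

theorem isUpperSet_inv_smul_NP {k : ℕ} (hk : 0 < k) (I : Ideal (MvPolynomial (Fin n) 𝕜)) :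
    IsUpperSet (((k : ℝ)⁻¹) • NP I) := by
  intro x y hxy hx
  have hk' : ((k : ℝ)⁻¹) ≠ 0 := by positivity
  rw [mem_smul_set_iff_inv_smul_mem₀ hk'] at hx ⊢
  exact isUpperSet_convexHull_exponentSet I (smul_le_smul_of_nonneg_left hxy (by positivity)) hx

theorem inv_smul_NP_subset_Ici (k : ℕ) (I : Ideal (MvPolynomial (Fin n) 𝕜)) :
    ((k : ℝ)⁻¹) • NP I ⊆ Ici 0 := by
  rintro _ ⟨x, hx, rfl⟩
  exact smul_nonneg (inv_nonneg.2 k.cast_nonneg)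
    (mem_Ici.1 (convexHull_exponentSet_subset_Ici I hx))

theorem inv_smul_NP_subset_mul (hF : ∀ p q, F p * F q ≤ F (p + q)) (k : ℕ) {m : ℕ}
    (hm : 0 < m) : ((k : ℝ)⁻¹) • NP (F k) ⊆ (((k * m : ℕ) : ℝ)⁻¹) • NP (F (k * m)) := by
  rintro _ ⟨x, hx, rfl⟩
  have hm' : (m : ℝ) ≠ 0 := Nat.cast_ne_zero.2 hm.ne'
  refine ⟨(m : ℝ) • x, ?_, ?_⟩
  · have hmx : (m : ℝ) • x ∈ (m : ℝ) • NP (F k) := smul_mem_smul_set hx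
    rw [NP_eq_convexHull_exponentSet, ← convexHull_smul] at hmx
    refine convexHull_mono ?_ hmx
    rintro _ ⟨y, hy, rfl⟩
    exact natCast_smul_mem_exponentSet hF hm hy
  · change ((k * m : ℕ) : ℝ)⁻¹ • ((m : ℝ) • x) = (k : ℝ)⁻¹ • x
    rw [smul_smul, Nat.cast_mul, mul_inv, mul_assoc, inv_mul_cancel₀ hm', mul_one]

theorem isUpperSet_limitBody (F : ℕ → Ideal (MvPolynomial (Fin n) 𝕜)) :
    IsUpperSet (limitBody F) :=
  isUpperSet_iUnion₂ fun k hk => isUpperSet_inv_smul_NP hk (F k)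

theorem limitBody_subset_Ici (F : ℕ → Ideal (MvPolynomial (Fin n) 𝕜)) : limitBody F ⊆ Ici 0 :=
  iUnion₂_subset fun k _ => inv_smul_NP_subset_Ici k (F k)

theorem inv_smul_NP_subset_limitBody {k : ℕ} (hk : 0 < k) :
    ((k : ℝ)⁻¹) • NP (F k) ⊆ limitBody F :=
  subset_iUnion₂ (s := fun (k : ℕ) (_ : 0 < k) => ((k : ℝ)⁻¹) • NP (F k)) k hk

theorem exists_subset_inv_smul_NP_of_finite (hF : ∀ p q, F p * F q ≤ F (p + q))
    {V : Set (Fin n → ℝ)} (hV : V.Finite) (hVP : V ⊆ limitBody F) :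
    ∃ c : ℕ, 0 < c ∧ V ⊆ ((c : ℝ)⁻¹) • NP (F c) := by
  induction V, hV using Set.Finite.induction_on with
  | empty => exact ⟨1, one_pos, empty_subset _⟩
  | @insert v V _ _ ih =>
    obtain ⟨c, hc, hVc⟩ := ih ((subset_insert v V).trans hVP)
    obtain ⟨k, hk, hvk⟩ := mem_iUnion₂.1 (hVP (mem_insert v V))
    refine ⟨k * c, mul_pos hk hc, insert_subset (inv_smul_NP_subset_mul hF k hc hvk) ?_⟩
    rw [mul_comm k]
    exact hVc.trans (inv_smul_NP_subset_mul hF c hk)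

/-- A convex combination `∑ wᵢ aᵢ` of exponents of `F k` is approximated by `∑ pᵢ aᵢ / ∑ pᵢ`
with `pᵢ = ⌊wᵢ N⌋ + 1`, an exponent of `F (k ∑ pᵢ)` divided by its degree. -/
theorem inv_smul_NP_subset_NObody (hF : ∀ p q, F p * F q ≤ F (p + q)) {k : ℕ} (hk : 0 < k) :
    ((k : ℝ)⁻¹) • NP (F k) ⊆ NObody F := by
  rintro _ ⟨x, hx, rfl⟩
  obtain ⟨ι, _, w, z, hw0, hw1, hz, rfl⟩ := mem_convexHull_iff_exists_fintype.1 hx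
  choose a ha hza using hz
  have hι : (Finset.univ : Finset ι).Nonempty := by
    by_contra hempty
    rw [Finset.not_nonempty_iff_eq_empty.1 hempty, Finset.sum_empty] at hw1
    exact zero_ne_one hw1
  set p : ℕ → ι → ℕ := fun N i => ⌊w i * N⌋₊ + 1
  have hp : ∀ i, Tendsto (fun N : ℕ => (p N i : ℝ) / N) atTop (𝓝 (w i)) := fun i => by
    have hfloor := (tendsto_nat_floor_mul_div_atTop (hw0 i)).comp tendsto_natCast_atTop_atTop
    simpa [p, add_div] using hfloor.add tendsto_one_div_atTop_nhds_zero_nat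
  have hsum : Tendsto (fun N : ℕ => ((∑ i, p N i : ℕ) : ℝ) / N) atTop (𝓝 1) := by
    simpa [Finset.sum_div, hw1] using tendsto_finsetSum Finset.univ fun i _ => hp i
  have hlim : Tendsto
      (fun N : ℕ => (k : ℝ)⁻¹ • ∑ i, ((p N i : ℝ) / N / (((∑ j, p N j : ℕ) : ℝ) / N)) • z i)
      atTop (𝓝 ((k : ℝ)⁻¹ • ∑ i, w i • z i)) := by
    refine Tendsto.const_smul (tendsto_finsetSum _ fun i _ => ?_) _
    simpa using ((hp i).div hsum one_ne_zero).smul_const (z i)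
  refine mem_closure_of_tendsto hlim ((eventually_ne_atTop 0).mono fun N hN => ?_)
  have hdeg : 0 < ∑ i, p N i := Finset.sum_pos (fun i _ => Nat.succ_pos _) hι
  refine mem_iUnion.2 ⟨k * ∑ i, p N i, mul_pos hk hdeg, ∑ i, p N i • a i, ?_, ?_⟩
  · rw [Finset.mul_sum]
    exact monomial_sum_mem_of_graded hF hι fun i _ =>
      monomial_nsmul_mem_of_graded hF (Nat.succ_pos _) (ha i)
  · ext l
    have hdeg' : (∑ i, (p N i : ℝ)) ≠ 0 := by exact_mod_cast hdeg.ne'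
    have hN' : (N : ℝ) ≠ 0 := Nat.cast_ne_zero.2 hN
    simp only [hza, smul_eq_mul, Pi.smul_apply, Finset.sum_apply, Finsupp.finsetSum_apply,
      Finsupp.smul_apply, Nat.cast_sum, Nat.cast_mul, div_div_div_cancel_right₀ hN']
    rw [Finset.mul_sum, Finset.sum_div]
    refine Finset.sum_congr rfl fun i _ => ?_
    field_simp

theorem NObody_eq_limitBody (hF : ∀ p q, F p * F q ≤ F (p + q))
    (hclosed : IsClosed (limitBody F)) : NObody F = limitBody F := by
  refine (closure_minimal (iUnion_subset fun k => ?_) hclosed).antisymm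
    (iUnion₂_subset fun k hk => inv_smul_NP_subset_NObody hF hk)
  rintro _ ⟨hk, a, ha, rfl⟩
  refine inv_smul_NP_subset_limitBody hk
    ⟨fun i => (a i : ℝ), subset_convexHull ℝ _ ⟨a, ha, rfl⟩, ?_⟩
  ext i
  simp [div_eq_inv_mul]

end NewtonPolyhedron

theorem stmt2_general {n : ℕ} {𝕜 : Type*} [Field 𝕜] (F : ℕ → Ideal (MvPolynomial (Fin n) 𝕜))
    (hgr : ∀ p q, F p * F q ≤ F (p + q))
    (hpoly : IsPolyhedron (limitBody F)) :
    ∃ c : ℕ, 1 ≤ c ∧ limitBody F = ((c : ℝ)⁻¹) • NP (F c) ∧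
      NObody F = ((c : ℝ)⁻¹) • NP (F c) := by
  obtain ⟨H, hH⟩ := hpoly
  have hP : limitBody F = {x | ∀ h ∈ H, h.2 ≤ h.1 ⬝ᵥ x} := hH
  obtain ⟨V, hVfin, hVP, hlow⟩ := exists_finite_forall_exists_convexHull_le
    (hP ▸ isUpperSet_limitBody F) (hP ▸ limitBody_subset_Ici F)
  obtain ⟨c, hc, hVc⟩ := exists_subset_inv_smul_NP_of_finite hgr hVfin (hP ▸ hVP)
  have hPc : limitBody F = ((c : ℝ)⁻¹) • NP (F c) := by
    refine Subset.antisymm (fun x hx => ?_) (inv_smul_NP_subset_limitBody hc)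
    obtain ⟨y, hyV, hyx⟩ := hlow x (hP ▸ hx)
    have hconv : Convex ℝ (((c : ℝ)⁻¹) • NP (F c)) := (convex_convexHull ℝ _).smul _
    exact isUpperSet_inv_smul_NP hc (F c) hyx (convexHull_min hVc hconv hyV)
  have hclosed : IsClosed (limitBody F) := hP ▸ isClosed_setOf_forall_le_dotProduct H
  exact ⟨c, hc, hPc, (NObody_eq_limitBody hgr hclosed).trans hPc⟩

theorem stmt2 {n : ℕ} {𝕜 : Type*} [Field 𝕜] (F : ℕ → Ideal (MvPolynomial (Fin n) 𝕜))
    (hmon : ∀ k, IsMonomialIdeal (F k)) (hgr : ∀ p q, F p * F q ≤ F (p + q))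
    (hpoly : IsPolyhedron (limitBody F)) :
    ∃ c : ℕ, 1 ≤ c ∧ limitBody F = ((c : ℝ)⁻¹) • NP (F c) ∧
      NObody F = ((c : ℝ)⁻¹) • NP (F c) :=
  stmt2_general F hgr hpoly
end

section
/- Let I be a monomial ideal of linear-power type with symbolic polyhedron SP(I) having vertices v₁,…,v_r, and let c be the least common multiple of all denominators of the coordinates of v₁,…,v_r. Then NP(I^{(c)}) = c·SP(I). -/
open MvPolynomial Pointwise

/-!
The exponents of the monomials of `I^{(c)}` are exactly the lattice points of `c • SP(I)`, the
polyhedron with the same constraints and right-hand sides `c ω`, and the choice of `c` makes its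
vertices lattice points. A polyhedron without lines whose vertices lie in a convex set `C` that is
stable under adding recession directions is contained in `C`: from a point that is not a vertex,
move both ways along a direction on which all tight constraints vanish until a new constraint
becomes tight (or forever, along a recession direction), and induct on the number of slack
constraints. The convex hull of the lattice points is such a `C`, since it is stable under adding
nonnegative vectors.
-/

theorem monomial_mem_span_X_image_pow_iff {σ R : Type*} [Fintype σ] [CommSemiring R]
    [Nontrivial R] (S : Finset σ) (m : ℕ) (a : σ →₀ ℕ) :
    monomial a (1 : R) ∈ Ideal.span (X '' (S : Set σ)) ^ m ↔ m ≤ ∑ i ∈ S, a i := by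
  classical
  constructor
  · intro h
    -- sending the variables of `S` to `X` and the others to `1` maps `𝔭_S ^ m` into `(X ^ m)`
    let φ : MvPolynomial σ R →ₐ[R] Polynomial R :=
      aeval fun i => if i ∈ S then Polynomial.X else 1
    have hmap : Ideal.map φ (Ideal.span (X '' (S : Set σ))) ≤ Ideal.span {Polynomial.X} := by
      rw [Ideal.map_span, Ideal.span_le]
      rintro _ ⟨_, ⟨i, hi, rfl⟩, rfl⟩
      simp [φ, Finset.mem_coe.1 hi]
    have hφa : φ (monomial a 1) = Polynomial.X ^ ∑ i ∈ S, a i := by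
      simp [φ, aeval_monomial, Finsupp.prod_fintype, ite_pow, Finset.prod_ite_mem,
        Finset.prod_pow_eq_pow_sum]
    have hmem : φ (monomial a 1) ∈ Ideal.span {Polynomial.X ^ m} := by
      rw [← Ideal.span_singleton_pow]
      exact Ideal.pow_right_mono hmap m (Ideal.map_pow φ _ m ▸ Ideal.mem_map_of_mem φ h)
    rw [hφa, Ideal.mem_span_singleton] at hmem
    by_contra! hlt
    simpa using Polynomial.X_pow_dvd_iff.1 hmem _ hlt
  · intro h
    refine Ideal.pow_le_pow_right h ?_
    have hS : ∏ i ∈ S, (X i : MvPolynomial σ R) ^ a i ∈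
        Ideal.span (X '' (S : Set σ)) ^ ∑ i ∈ S, a i := by
      rw [← Finset.prod_pow_eq_pow_sum]
      exact Ideal.prod_mem_prod fun i hi =>
        Ideal.pow_mem_pow (Ideal.subset_span (Set.mem_image_of_mem X hi)) _
    rw [monomial_eq, C_1, one_mul, Finsupp.prod_fintype _ _ (fun _ => pow_zero _),
      ← Finset.prod_mul_prod_compl S]
    exact Ideal.mul_mem_right _ _ hS

section Polyhedron

variable {E κ : Type*} [AddCommGroup E] [Module ℝ E]

def polyhedron (ℓ : κ → E →ₗ[ℝ] ℝ) (β : κ → ℝ) : Set E := {x | ∀ k, β k ≤ ℓ k x}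

def polyhedronSlack (ℓ : κ → E →ₗ[ℝ] ℝ) (β : κ → ℝ) (x : E) : Set κ := {k | β k < ℓ k x}

variable {ℓ : κ → E →ₗ[ℝ] ℝ} {β : κ → ℝ}

theorem convex_polyhedron : Convex ℝ (polyhedron ℓ β) := by
  simpa only [polyhedron, Set.ofPred_forall] using
    convex_iInter fun k => convex_halfSpace_ge (ℓ k).isLinear (β k)

theorem mem_extremePoints_polyhedron_of_tight {x : E} (hx : x ∈ polyhedron ℓ β)
    (h : ∀ d, (∀ k, ℓ k x = β k → ℓ k d = 0) → d = 0) :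
    x ∈ Set.extremePoints ℝ (polyhedron ℓ β) := by
  refine mem_extremePoints_iff_left.2 ⟨hx, fun y hy z hz ⟨a, b, ha, hb, hab, hxyz⟩ => ?_⟩
  refine sub_eq_zero.1 (h (y - x) fun k hk => ?_)
  have hcomb : a * ℓ k y + b * ℓ k z = ℓ k x := by simp [← hxyz]
  have hy' := mul_le_mul_of_nonneg_left (hy k) ha.le
  have hz' := mul_le_mul_of_nonneg_left (hz k) hb.le
  have hβ : β k = a * β k + b * β k := by rw [← add_mul, hab, one_mul]
  have : a * ℓ k y = a * β k := by linarith
  simp [(mul_right_inj' ha.ne').1 this, hk]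

theorem exists_add_smul_mem_polyhedron_slack_lt [Finite κ] {x d : E}
    (hx : x ∈ polyhedron ℓ β) (hd : ∀ k, ℓ k x = β k → ℓ k d = 0) (hneg : ∃ k, ℓ k d < 0) :
    ∃ t : ℝ, 0 < t ∧ x + t • d ∈ polyhedron ℓ β ∧
      (polyhedronSlack ℓ β (x + t • d)).ncard < (polyhedronSlack ℓ β x).ncard := by
  classical
  have := Fintype.ofFinite κ
  set K := Finset.univ.filter fun k => ℓ k d < 0
  have hK : K.Nonempty := by simpa [K, Finset.filter_nonempty_iff] using hneg
  set ratio : κ → ℝ := fun k => (ℓ k x - β k) / -ℓ k d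
  set t := K.inf' hK ratio
  have hslackK : ∀ k ∈ K, β k < ℓ k x := fun k hk =>
    (hx k).lt_of_ne fun h => (Finset.mem_filter.1 hk).2.ne (hd k h.symm)
  have hbound : ∀ k ∈ K, t * -ℓ k d ≤ ℓ k x - β k := fun k hk =>
    (le_div_iff₀ (neg_pos.2 (Finset.mem_filter.1 hk).2)).1 (K.inf'_le ratio hk)
  have hval : ∀ k, ℓ k (x + t • d) = ℓ k x + t * ℓ k d := by simp
  have ht : 0 < t := (Finset.lt_inf'_iff hK).2 fun k hk =>
    div_pos (sub_pos.2 (hslackK k hk)) (neg_pos.2 (Finset.mem_filter.1 hk).2)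
  refine ⟨t, ht, fun k => ?_, Set.ncard_lt_ncard ?_⟩
  · rw [hval]
    by_cases hk : ℓ k d < 0
    · linarith [hbound k (Finset.mem_filter.2 ⟨Finset.mem_univ _, hk⟩)]
    · linarith [hx k, mul_nonneg ht.le (not_lt.1 hk)]
  obtain ⟨k₀, hk₀, ht₀⟩ := K.exists_mem_eq_inf' hK ratio
  have hsub : polyhedronSlack ℓ β (x + t • d) ⊆ polyhedronSlack ℓ β x := fun k hk =>
    (hx k).lt_of_ne fun h => by simp [polyhedronSlack, hval, hd k h.symm, ← h] at hk
  refine hsub.ssubset_of_mem_notMem (hslackK k₀ hk₀) ?_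
  have hk₀t : ℓ k₀ x + t * ℓ k₀ d = β k₀ := by
    rw [show t = ratio k₀ from ht₀, div_mul_eq_mul_div, div_neg, mul_div_assoc,
      div_self (Finset.mem_filter.1 hk₀).2.ne]
    ring
  simp [polyhedronSlack, hval, hk₀t]

theorem polyhedron_subset_of_extremePoints_subset [Finite κ]
    (hline : ∀ d, (∀ k, ℓ k d = 0) → d = 0) {C : Set E} (hC : Convex ℝ C)
    (hext : Set.extremePoints ℝ (polyhedron ℓ β) ⊆ C)
    (hrec : ∀ y ∈ C, ∀ d, (∀ k, 0 ≤ ℓ k d) → y + d ∈ C) :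
    polyhedron ℓ β ⊆ C := by
  intro x hx
  induction hm : (polyhedronSlack ℓ β x).ncard using Nat.strong_induction_on generalizing x with
  | _ m ih =>
  by_cases hker : ∀ d, (∀ k, ℓ k x = β k → ℓ k d = 0) → d = 0
  · exact hext (mem_extremePoints_polyhedron_of_tight hx hker)
  push Not at hker
  obtain ⟨d, hd, hd0⟩ := hker
  have step : ∀ e, (∀ k, ℓ k x = β k → ℓ k e = 0) → (∃ k, ℓ k e < 0) →
      ∃ t : ℝ, 0 < t ∧ x + t • e ∈ C := by
    intro e he hneg
    obtain ⟨t, ht, hmem, hlt⟩ := exists_add_smul_mem_polyhedron_slack_lt hx he hneg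
    exact ⟨t, ht, ih _ (hm ▸ hlt) hmem rfl⟩
  have hd' : ∀ k, ℓ k x = β k → ℓ k (-d) = 0 := by simpa using hd
  by_cases hpos : ∃ k, ℓ k d < 0 <;> by_cases hneg : ∃ k, ℓ k (-d) < 0
  · obtain ⟨s, hs, hxs⟩ := step d hd hpos
    obtain ⟨t, ht, hxt⟩ := step (-d) hd' hneg
    convert hC hxs hxt (div_pos ht (add_pos hs ht)).le (div_pos hs (add_pos hs ht)).le
      (by rw [← add_div, add_comm, div_self (add_pos hs ht).ne']) using 1
    match_scalars <;> field_simp <;> ring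
  · obtain ⟨s, hs, hxs⟩ := step d hd hpos
    push Not at hneg
    simpa using hrec _ hxs (s • -d) fun k => by simpa using mul_nonneg hs.le (hneg k)
  · obtain ⟨t, ht, hxt⟩ := step (-d) hd' hneg
    push Not at hpos
    simpa using hrec _ hxt (t • d) fun k => by simpa using mul_nonneg ht.le (hpos k)
  · push Not at hpos hneg
    exact absurd (hline d fun k => le_antisymm (by simpa using hneg k) (hpos k)) hd0

end Polyhedron

theorem extremePoints_smul {E : Type*} [AddCommGroup E] [Module ℝ E] {c : ℝ} (hc : c ≠ 0)
    (s : Set E) : Set.extremePoints ℝ (c • s) = c • Set.extremePoints ℝ s := by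
  rw [← Set.image_smul, ← Set.image_smul]
  exact (image_extremePoints (LinearEquiv.smulOfNeZero ℝ E c hc) s).symm

theorem add_mem_convexHull_of_nonneg {σ : Type*} [Fintype σ] [DecidableEq σ] {A : Set (σ → ℝ)}
    (hA : ∀ x ∈ A, ∀ i, ∀ N : ℕ, x + Pi.single i (N : ℝ) ∈ A) {y r : σ → ℝ}
    (hy : y ∈ convexHull ℝ A) (hr : 0 ≤ r) : y + r ∈ convexHull ℝ A := by
  have add_single : ∀ y ∈ convexHull ℝ A, ∀ i, ∀ t : ℝ, 0 ≤ t →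
      y + Pi.single i t ∈ convexHull ℝ A := by
    intro y hy i t ht
    obtain ⟨N, hN⟩ := exists_nat_gt t
    have hN0 : (0 : ℝ) < N := ht.trans_lt hN
    have hseg : (Pi.single i t : σ → ℝ) ∈ convexHull ℝ {0, Pi.single i (N : ℝ)} := by
      rw [convexHull_pair]
      refine ⟨1 - t / N, t / N, sub_nonneg.2 ((div_le_one hN0).2 hN.le), div_nonneg ht hN0.le,
        by ring, ?_⟩
      rw [smul_zero, zero_add, ← Pi.single_smul', smul_eq_mul, div_mul_cancel₀ _ hN0.ne']
    have := Set.add_mem_add hy hseg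
    rw [← convexHull_add] at this
    refine convexHull_mono ?_ this
    rintro _ ⟨x, hx, v, rfl | rfl, rfl⟩
    · simpa using hx
    · exact hA x hx i N
  suffices ∀ s : Finset σ, y + ∑ i ∈ s, Pi.single i (r i) ∈ convexHull ℝ A by
    simpa [Finset.univ_sum_single] using this Finset.univ
  intro s
  induction s using Finset.induction_on with
  | empty => simpa using hy
  | insert i s hi ih =>
    rw [Finset.sum_insert hi, add_left_comm, add_comm]
    exact add_single _ ih i _ (hr i)

def latticePoints {σ : Type*} (S : Set (σ → ℝ)) : Set (σ → ℝ) :=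
  {x ∈ S | ∀ i, ∃ m : ℕ, x i = m}

section SymbolicPolyhedron

variable {n : ℕ} {ι : Type*}

theorem SPset_eq_polyhedron (supp : ι → Finset (Fin n)) (b : ι → ℕ) :
    SPset supp b = polyhedron
      (Sum.elim (LinearMap.proj (R := ℝ) (φ := fun _ : Fin n => ℝ))
        fun j => ∑ i ∈ supp j, LinearMap.proj i)
      (Sum.elim 0 fun j => (b j : ℝ)) := by
  ext x
  simp [SPset, polyhedron, Sum.forall]

theorem add_mem_SPset {supp : ι → Finset (Fin n)} {b : ι → ℕ} {x r : Fin n → ℝ}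
    (hx : x ∈ SPset supp b) (hr : 0 ≤ r) : x + r ∈ SPset supp b :=
  ⟨fun i => add_nonneg (hx.1 i) (hr i), fun j => (hx.2 j).trans <| by
    simpa [Finset.sum_add_distrib] using Finset.sum_nonneg fun i _ => hr i⟩

theorem smul_SPset (supp : ι → Finset (Fin n)) (ω : ι → ℕ) {c : ℕ} (hc : 0 < c) :
    (c : ℝ) • SPset supp ω = SPset supp fun j => c * ω j := by
  have hc' : (0 : ℝ) < c := by exact_mod_cast hc
  ext x
  simp only [Set.mem_smul_set_iff_inv_smul_mem₀ hc'.ne', SPset, Set.mem_ofPred_eq, Pi.smul_apply,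
    smul_eq_mul, ← Finset.mul_sum, mul_nonneg_iff_of_pos_left (inv_pos.2 hc'),
    le_inv_mul_iff₀ hc', Nat.cast_mul]

theorem convexHull_latticePoints_SPset [Finite ι] (supp : ι → Finset (Fin n)) (b : ι → ℕ)
    (hext : ∀ v ∈ Set.extremePoints ℝ (SPset supp b), ∀ i, ∃ z : ℤ, v i = z) :
    convexHull ℝ (latticePoints (SPset supp b)) = SPset supp b := by
  refine (convexHull_min (Set.sep_subset _ _) ?_).antisymm ?_
  · rw [SPset_eq_polyhedron]
    exact convex_polyhedron
  calc SPset supp b = _ := SPset_eq_polyhedron supp b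
    _ ⊆ convexHull ℝ (latticePoints (SPset supp b)) := by
      refine polyhedron_subset_of_extremePoints_subset
        (fun d hd => by ext i; simpa using hd (Sum.inl i)) (convex_convexHull ℝ _) ?_
        fun y hy d hd => ?_
      · rw [← SPset_eq_polyhedron]
        intro v hv
        refine subset_convexHull ℝ _ ⟨hv.1, fun i => ?_⟩
        obtain ⟨z, hz⟩ := hext v hv i
        have hz0 : 0 ≤ z := by exact_mod_cast hz ▸ hv.1.1 i
        exact ⟨z.toNat, by rw [hz]; exact_mod_cast (Int.toNat_of_nonneg hz0).symm⟩
      · refine add_mem_convexHull_of_nonneg (fun x hx i N => ?_) hy fun i => by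
          simpa using hd (Sum.inl i)
        refine ⟨add_mem_SPset hx.1 (Pi.single_nonneg.2 N.cast_nonneg), fun k => ?_⟩
        obtain ⟨m, hm⟩ := hx.2 k
        rcases eq_or_ne k i with rfl | hki
        · exact ⟨m + N, by simp [hm]⟩
        · exact ⟨m, by simp [hm, hki]⟩

end SymbolicPolyhedron

section SymbolicPower

variable {n : ℕ} {𝕜 : Type*} [Field 𝕜] {ι : Type*} [Fintype ι]

theorem monomial_mem_symb_iff (supp : ι → Finset (Fin n)) (ω : ι → ℕ) (k : ℕ)
    (a : Fin n →₀ ℕ) :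
    monomial a (1 : 𝕜) ∈ symb supp ω k ↔ ∀ j, k * ω j ≤ ∑ i ∈ supp j, a i := by
  simp only [symb, Submodule.mem_iInf, monomial_mem_span_X_image_pow_iff]

theorem exponents_symb_eq_latticePoints (supp : ι → Finset (Fin n)) (ω : ι → ℕ) (k : ℕ) :
    {x | ∃ a : Fin n →₀ ℕ, monomial a (1 : 𝕜) ∈ symb supp ω k ∧ x = fun i => (a i : ℝ)} =
      latticePoints (SPset supp fun j => k * ω j) := by
  ext x
  constructor
  · rintro ⟨a, ha, rfl⟩
    rw [monomial_mem_symb_iff] at ha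
    refine ⟨⟨fun i => by positivity, fun j => ?_⟩, fun i => ⟨a i, rfl⟩⟩
    show ((k * ω j : ℕ) : ℝ) ≤ ∑ i ∈ supp j, (a i : ℝ)
    exact_mod_cast ha j
  · rintro ⟨hx, hnat⟩
    choose m hm using hnat
    refine ⟨Finsupp.equivFunOnFinite.symm m, (monomial_mem_symb_iff _ _ _ _).2 fun j => ?_, ?_⟩
    · have hj : ((k * ω j : ℕ) : ℝ) ≤ ∑ i ∈ supp j, (m i : ℝ) := by simpa [hm] using hx.2 j
      simpa using (by exact_mod_cast hj : k * ω j ≤ ∑ i ∈ supp j, m i)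
    · ext i
      simp [hm]

end SymbolicPower

theorem stmt11_general {n : ℕ} {𝕜 : Type*} [Field 𝕜] {ι : Type*} [Fintype ι]
    (supp : ι → Finset (Fin n))
    (ω : ι → ℕ)
    (c : ℕ) (hc0 : 0 < c)
    (hcint : ∀ v ∈ Set.extremePoints ℝ (SPset supp ω), ∀ i, ∃ z : ℤ, (c : ℝ) * v i = z) :
    NP (symb (𝕜 := 𝕜) supp ω c) = (c : ℝ) • SPset supp ω := by
  rw [NP, exponents_symb_eq_latticePoints, smul_SPset supp ω hc0]
  refine convexHull_latticePoints_SPset supp _ fun v hv i => ?_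
  rw [← smul_SPset supp ω hc0, extremePoints_smul (by positivity)] at hv
  obtain ⟨u, hu, rfl⟩ := hv
  exact hcint u hu i

/-- with `c` the lcm of the denominators of the coordinates of the vertices
of `SP(I)`, one has `NP(I^{(c)}) = c · SP(I)`. -/
theorem stmt11 {n : ℕ} {𝕜 : Type*} [Field 𝕜] {ι : Type*} [Fintype ι] [Nonempty ι]
    (supp : ι → Finset (Fin n)) (hsupp : ∀ j, (supp j).Nonempty)
    (ω : ι → ℕ) (hω : ∀ j, 0 < ω j)
    (c : ℕ) (hc0 : 0 < c)
    (hcint : ∀ v ∈ Set.extremePoints ℝ (SPset supp ω), ∀ i, ∃ z : ℤ, (c : ℝ) * v i = z)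
    (hcmin : ∀ m : ℕ, 0 < m →
      (∀ v ∈ Set.extremePoints ℝ (SPset supp ω), ∀ i, ∃ z : ℤ, (m : ℝ) * v i = z) → c ∣ m) :
    NP (symb (𝕜 := 𝕜) supp ω c) = (c : ℝ) • SPset supp ω :=
  stmt11_general supp ω c hc0 hcint
end
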